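/- If M ∈ M_N(ℂ) is Hermitian with eigenvalues a₁ ≤ a₂ ≤ … ≤ a_N and k ≤ N/2, then the rank-k numerical range Λ_k(M) equals the interval [a_k, a_{N-k+1}] (viewed as a subset of ℂ on the real axis). -/

import Mathlib

/-!
Conjugating by the unitary matrix whose columns are the eigenvectors reduces everything to
`D = diagonal a`. If `P D P = c P` with `P` an orthogonal projection of rank `k`, then
`u* D u = c ‖u‖²` for every `u` in the range of `P`. By counting dimensions that range contains a
nonzero vector supported on the indices `≥ k - 1` (resp. `≤ N - k`), which forces
`a (k - 1) ≤ c ≤ a (N - k)` in the partial order of `ℂ`, hence also `c ∈ ℝ`.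
Conversely, for `a (k - 1) ≤ λ ≤ a (N - k)` and `i < k` write `λ = p a i + q a (N - 1 - i)` as
a convex combination; the vectors `√p eᵢ + √q e_{N-1-i}` are orthonormal with pairwise disjoint
supports, so they compress `D` to `λ • 1`, and their span is the required projection.
-/

open Matrix BigOperators Finset

noncomputable section

/-- Numerical range of a complex matrix. -/
def NumRange {n : ℕ} (M : Matrix (Fin n) (Fin n) ℂ) : Set ℂ :=
  { c | ∃ u : Fin n → ℂ, star u ⬝ᵥ u = 1 ∧ star u ⬝ᵥ M.mulVec u = c }

/-- `C` is a rank-`k` compression of `M`: `C` represents `P_S M |_S` in some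
orthonormal basis of a `k`-dimensional subspace `S`. -/
def IsCompression {N k : ℕ} (M : Matrix (Fin N) (Fin N) ℂ)
    (C : Matrix (Fin k) (Fin k) ℂ) : Prop :=
  ∃ f : Fin k → (Fin N → ℂ),
    (∀ i j, star (f i) ⬝ᵥ f j = if i = j then 1 else 0) ∧
    (∀ i j, C i j = star (f i) ⬝ᵥ M.mulVec (f j))

/-- `diag(a,b)` is a compression of `M`. -/
def IsDiagCompression {N : ℕ} (M : Matrix (Fin N) (Fin N) ℂ) (a b : ℂ) : Prop :=
  ∃ u w : Fin N → ℂ,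
    star u ⬝ᵥ u = 1 ∧ star w ⬝ᵥ w = 1 ∧ star u ⬝ᵥ w = 0 ∧
    star u ⬝ᵥ M.mulVec u = a ∧ star w ⬝ᵥ M.mulVec w = b ∧
    star u ⬝ᵥ M.mulVec w = 0 ∧ star w ⬝ᵥ M.mulVec u = 0

/-- The rank-`k` numerical range `Λ_k(M)`. -/
def rankNumRange {N : ℕ} (k : ℕ) (M : Matrix (Fin N) (Fin N) ℂ) : Set ℂ :=
  { c | ∃ P : Matrix (Fin N) (Fin N) ℂ,
      P.IsHermitian ∧ P * P = P ∧ P.rank = k ∧ P * M * P = c • P }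

/-- `M` has an orthonormal basis of eigenvectors with eigenvalue list `z`. -/
def HasONEigenbasis {N : ℕ} (M : Matrix (Fin N) (Fin N) ℂ) (z : Fin N → ℂ) : Prop :=
  ∃ f : Fin N → (Fin N → ℂ),
    (∀ i j, star (f i) ⬝ᵥ f j = if i = j then 1 else 0) ∧
    (∀ j, M.mulVec (f j) = z j • f j)

/-- 2D cross product of complex numbers viewed as plane vectors. -/
def cross2 (p q : ℂ) : ℝ := p.re * q.im - p.im * q.re

-- `z ≤ w ↔ z.re ≤ w.re ∧ z.im = w.im`, so a real lower bound `λ ≤ c` also says that `c` is real.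
open scoped ComplexOrder

namespace Matrix

lemma exists_ne_zero_mulVec_eq_self_of_card_lt {K n : Type*} [Field K] [Fintype n]
    [DecidableEq n] {P : Matrix n n K} (hP : P * P = P) (s : Finset n)
    (hs : Fintype.card n < P.rank + s.card) :
    ∃ u ≠ 0, P *ᵥ u = u ∧ ∀ j ∉ s, u j = 0 := by
  let V := LinearMap.range P.mulVecLin
  let restrict : V →ₗ[K] (↥(sᶜ : Finset n) → K) :=
    LinearMap.pi (fun j => LinearMap.proj (j : n)) ∘ₗ V.subtype
  have hdim : Module.finrank K (↥(sᶜ : Finset n) → K) < Module.finrank K V := by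
    rw [Module.finrank_fintype_fun_eq_card, Fintype.card_coe, Finset.card_compl]
    have := s.card_le_univ
    change _ < P.rank
    omega
  obtain ⟨⟨u, hV⟩, hker, hu⟩ :=
    (Submodule.ne_bot_iff _).mp (LinearMap.ker_ne_bot_of_finrank_lt hdim)
  obtain ⟨w, rfl⟩ := hV
  refine ⟨P *ᵥ w, fun h => hu (Subtype.ext h), ?_, fun j hj => ?_⟩
  · simp only [mulVec_mulVec, hP]
  · have h : restrict _ = 0 := hker
    exact congrFun h ⟨j, Finset.mem_compl.mpr hj⟩

lemma star_dotProduct_mulVec_eq_of_mulVec_eq_self {n α : Type*} [Fintype n] [CommSemiring α]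
    [StarRing α] {P M : Matrix n n α} {c : α} (hP : Pᴴ = P) (hPMP : P * M * P = c • P)
    {u : n → α} (hu : P *ᵥ u = u) :
    star u ⬝ᵥ M *ᵥ u = c * (star u ⬝ᵥ u) := by
  conv_lhs => rw [← hu]
  rw [star_mulVec, hP, mulVec_mulVec, dotProduct_mulVec, vecMul_vecMul, ← mul_assoc, hPMP,
    ← dotProduct_mulVec, smul_mulVec, dotProduct_smul, smul_eq_mul, hu]

lemma mul_star_dotProduct_le_of_support {n R : Type*} [Fintype n] [DecidableEq n] [CommRing R]
    [PartialOrder R] [StarRing R] [StarOrderedRing R] [IsOrderedRing R] {d : n → R} {lam : R}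
    {s : Finset n} (hlam : ∀ j ∈ s, lam ≤ d j) {u : n → R} (hu : ∀ j ∉ s, u j = 0) :
    lam * (star u ⬝ᵥ u) ≤ star u ⬝ᵥ diagonal d *ᵥ u := by
  simp only [dotProduct, mulVec_diagonal, Finset.mul_sum]
  refine Finset.sum_le_sum fun j _ => ?_
  by_cases hj : j ∈ s
  · calc lam * (star u j * u j) ≤ d j * (star u j * u j) :=
          mul_le_mul_of_nonneg_right (hlam j hj) (star_mul_self_nonneg _)
      _ = star u j * (d j * u j) := by ring
  · simp [hu j hj]

def pairColumns {m n R : Type*} [DecidableEq n] [Zero R] [Add R] (lo hi : m → n) (x y : m → R) :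
    Matrix n m R :=
  Matrix.of fun l i => (Pi.single (lo i) (x i) : n → R) l + (Pi.single (hi i) (y i) : n → R) l

lemma conjTranspose_pairColumns_mul_diagonal_mul {m n R : Type*} [Fintype n] [DecidableEq n]
    [DecidableEq m] [CommSemiring R] [StarRing R] {lo hi : m → n} (hlo : lo.Injective)
    (hhi : hi.Injective) (hdisj : ∀ i j, lo i ≠ hi j) (x y : m → R) (w : n → R) :
    (pairColumns lo hi x y)ᴴ * diagonal w * pairColumns lo hi x y =
      diagonal fun i => star (x i) * w (lo i) * x i + star (y i) * w (hi i) * y i := by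
  ext i j
  simp only [mul_apply (M := _ * _), mul_diagonal, pairColumns, conjTranspose_apply, of_apply,
    star_add, add_mul, mul_add, Finset.sum_add_distrib, Pi.single_apply]
  by_cases hij : i = j
  · subst hij
    simp [hdisj, (hdisj _ _).symm]
  · simp [hlo.eq_iff, hhi.eq_iff, hdisj, (hdisj _ _).symm, hij, Ne.symm hij]

end Matrix

section rankNumRange

variable {N k : ℕ}

lemma mem_rankNumRange_unitary_conj {M : Matrix (Fin N) (Fin N) ℂ} {c : ℂ}
    (hc : c ∈ rankNumRange k M) {U : Matrix (Fin N) (Fin N) ℂ}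
    (hU : U ∈ unitaryGroup (Fin N) ℂ) : c ∈ rankNumRange k (star U * M * U) := by
  obtain ⟨P, hPh, hPP, hrank, hPMP⟩ := hc
  have hUU : U * star U = 1 := mem_unitaryGroup_iff.mp hU
  have hdet : IsUnit U.det := UnitaryGroup.det_isUnit ⟨U, hU⟩
  refine ⟨star U * P * U, ?_, ?_, ?_, ?_⟩
  · simpa [star_eq_conjTranspose] using isHermitian_conjTranspose_mul_mul U hPh
  · calc star U * P * U * (star U * P * U) = star U * (P * (U * star U) * P) * U := by
          simp only [Matrix.mul_assoc]
      _ = star U * P * U := by rw [hUU, Matrix.mul_one, hPP, Matrix.mul_assoc]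
  · rw [rank_mul_eq_left_of_isUnit_det _ _ hdet, rank_mul_eq_right_of_isUnit_det _ _ ?_, hrank]
    rw [star_eq_conjTranspose, det_conjTranspose]
    exact hdet.star
  · calc star U * P * U * (star U * M * U) * (star U * P * U)
        = star U * (P * (U * star U) * M * (U * star U) * P) * U := by
          simp only [Matrix.mul_assoc]
      _ = c • (star U * P * U) := by
          rw [hUU, Matrix.mul_one, Matrix.mul_one, hPMP, Matrix.mul_smul, Matrix.smul_mul]

lemma rankNumRange_unitary_conj (M : Matrix (Fin N) (Fin N) ℂ) {U : Matrix (Fin N) (Fin N) ℂ}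
    (hU : U ∈ unitaryGroup (Fin N) ℂ) : rankNumRange k (star U * M * U) = rankNumRange k M := by
  refine Set.Subset.antisymm (fun c hc => ?_) fun c hc => mem_rankNumRange_unitary_conj hc hU
  have hU' : star U ∈ unitaryGroup (Fin N) ℂ := Unitary.star_mem hU
  have hUU : U * star U = 1 := mem_unitaryGroup_iff.mp hU
  have hMU : star (star U) * (star U * M * U) * star U = M := by
    rw [star_star, show U * (star U * M * U) * star U = U * star U * M * (U * star U) by
      simp only [Matrix.mul_assoc], hUU, Matrix.one_mul, Matrix.mul_one]
  simpa only [hMU] using mem_rankNumRange_unitary_conj hc hU'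

lemma neg_mem_rankNumRange_neg {M : Matrix (Fin N) (Fin N) ℂ} {c : ℂ}
    (hc : c ∈ rankNumRange k M) : -c ∈ rankNumRange k (-M) := by
  obtain ⟨P, hPh, hPP, hrank, hPMP⟩ := hc
  exact ⟨P, hPh, hPP, hrank, by rw [Matrix.mul_neg, Matrix.neg_mul, hPMP, neg_smul]⟩

lemma mem_rankNumRange_of_conjTranspose_mul_self {M : Matrix (Fin N) (Fin N) ℂ} {c : ℂ}
    {U : Matrix (Fin N) (Fin k) ℂ} (hU : Uᴴ * U = 1) (hMU : Uᴴ * M * U = c • 1) :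
    c ∈ rankNumRange k M := by
  refine ⟨U * Uᴴ, isHermitian_mul_conjTranspose_self U, ?_, ?_, ?_⟩
  · rw [Matrix.mul_assoc, ← Matrix.mul_assoc Uᴴ, hU, Matrix.one_mul]
  · rw [rank_self_mul_conjTranspose, ← rank_conjTranspose_mul_self, hU, rank_one,
      Fintype.card_fin]
  · calc U * Uᴴ * M * (U * Uᴴ) = U * (Uᴴ * M * U) * Uᴴ := by simp only [Matrix.mul_assoc]
      _ = c • (U * Uᴴ) := by rw [hMU, Matrix.mul_smul, Matrix.mul_one, Matrix.smul_mul]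

end rankNumRange

lemma HasONEigenbasis.exists_unitary_conj_eq_diagonal {N : ℕ} {M : Matrix (Fin N) (Fin N) ℂ}
    {z : Fin N → ℂ} (h : HasONEigenbasis M z) :
    ∃ U ∈ unitaryGroup (Fin N) ℂ, star U * M * U = diagonal z := by
  obtain ⟨f, horth, heigen⟩ := h
  let F : Matrix (Fin N) (Fin N) ℂ := of fun i j => f j i
  have hFF : star F * F = 1 := by
    ext i j
    simpa [F, mul_apply, dotProduct, one_apply] using horth i j
  have hMF : M * F = F * diagonal z := by
    ext i j
    have := congrFun (heigen j) i
    simp only [mulVec, dotProduct, Pi.smul_apply, smul_eq_mul] at this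
    rw [mul_diagonal, mul_comm]
    simpa [F, mul_apply] using this
  refine ⟨F, mem_unitaryGroup_iff'.mpr hFF, ?_⟩
  rw [Matrix.mul_assoc, hMF, ← Matrix.mul_assoc, hFF, Matrix.one_mul]

section diagonal

variable {N k : ℕ}

lemma le_of_mem_rankNumRange_diagonal {d : Fin N → ℂ} {c lam : ℂ}
    (hc : c ∈ rankNumRange k (diagonal d)) (s : Finset (Fin N)) (hs : N < k + s.card)
    (hlam : ∀ j ∈ s, lam ≤ d j) : lam ≤ c := by
  obtain ⟨P, hPh, hPP, rfl, hPDP⟩ := hc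
  obtain ⟨u, hu0, hPu, hus⟩ :=
    exists_ne_zero_mulVec_eq_self_of_card_lt hPP s (by rwa [Fintype.card_fin])
  refine le_of_mul_le_mul_right ?_ (dotProduct_star_self_pos_iff.mpr hu0)
  calc lam * (star u ⬝ᵥ u) ≤ star u ⬝ᵥ diagonal d *ᵥ u :=
        mul_star_dotProduct_le_of_support hlam hus
    _ = c * (star u ⬝ᵥ u) := star_dotProduct_mulVec_eq_of_mulVec_eq_self hPh hPDP hPu

lemma le_of_mem_rankNumRange_diagonal' {d : Fin N → ℂ} {c lam : ℂ}
    (hc : c ∈ rankNumRange k (diagonal d)) (s : Finset (Fin N)) (hs : N < k + s.card)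
    (hlam : ∀ j ∈ s, d j ≤ lam) : c ≤ lam := by
  have hc' : -c ∈ rankNumRange k (diagonal fun j => -d j) := by
    simpa only [diagonal_neg] using neg_mem_rankNumRange_neg hc
  exact neg_le_neg_iff.mp <|
    le_of_mem_rankNumRange_diagonal hc' s hs fun j hj => neg_le_neg (hlam j hj)

lemma rankNumRange_diagonal_subset_Icc {a : Fin N → ℝ} (ha : Monotone a) {i₀ i₁ : Fin N}
    (hi₀ : (i₀ : ℕ) + 1 = k) (hi₁ : (i₁ : ℕ) + k = N) :
    rankNumRange k (diagonal fun j => (a j : ℂ)) ⊆ Set.Icc (a i₀ : ℂ) (a i₁) := by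
  intro c hc
  refine ⟨le_of_mem_rankNumRange_diagonal hc (Finset.Ici i₀) ?_ fun j hj => ?_,
    le_of_mem_rankNumRange_diagonal' hc (Finset.Iic i₁) ?_ fun j hj => ?_⟩
  · rw [Fin.card_Ici]; omega
  · exact Complex.real_le_real.mpr (ha (Finset.mem_Ici.mp hj))
  · rw [Fin.card_Iic]; omega
  · exact Complex.real_le_real.mpr (ha (Finset.mem_Iic.mp hj))

lemma Icc_subset_rankNumRange_diagonal (hkN : 2 * k ≤ N) {a : Fin N → ℝ} (ha : Monotone a)
    {i₀ i₁ : Fin N} (hi₀ : (i₀ : ℕ) + 1 = k) (hi₁ : (i₁ : ℕ) + k = N) :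
    Set.Icc (a i₀ : ℂ) (a i₁) ⊆ rankNumRange k (diagonal fun j => (a j : ℂ)) := by
  rintro c ⟨hlow, hhigh⟩
  obtain ⟨lam, rfl⟩ : ∃ lam : ℝ, (lam : ℂ) = c :=
    ⟨c.re, Complex.ext rfl (Complex.le_def.mp hlow).2⟩
  rw [Complex.real_le_real] at hlow hhigh
  let lo : Fin k → Fin N := fun i => ⟨i, by omega⟩
  let hi : Fin k → Fin N := fun i => ⟨N - 1 - i, by omega⟩
  have hlo : lo.Injective := fun i j h => Fin.ext (by simpa [lo] using congrArg Fin.val h)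
  have hhi : hi.Injective := fun i j h => Fin.ext (by
    have := congrArg Fin.val h; simp only [hi] at this; omega)
  have hdisj : ∀ i j, lo i ≠ hi j := fun i j h => by
    have := congrArg Fin.val h; simp only [lo, hi] at this; omega
  have hlo_le : ∀ i, a (lo i) ≤ lam := fun i =>
    (ha (Fin.le_iff_val_le_val.mpr (by simp only [lo]; omega))).trans hlow
  have hle_hi : ∀ i, lam ≤ a (hi i) := fun i =>
    hhigh.trans (ha (Fin.le_iff_val_le_val.mpr (by simp only [hi]; omega)))
  have hseg : ∀ i, lam ∈ segment ℝ (a (lo i)) (a (hi i)) := fun i => by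
    rw [segment_eq_Icc ((hlo_le i).trans (hle_hi i))]
    exact ⟨hlo_le i, hle_hi i⟩
  choose p q hp hq hpq hlam using hseg
  let x : Fin k → ℂ := fun i => √(p i)
  let y : Fin k → ℂ := fun i => √(q i)
  have hsq : ∀ r : ℝ, 0 ≤ r → star (√r : ℂ) * √r = r := fun r hr => by
    rw [Complex.star_def, Complex.conj_ofReal, ← Complex.ofReal_mul, Real.mul_self_sqrt hr]
  have hU : ∀ w : Fin N → ℂ, (pairColumns lo hi x y)ᴴ * diagonal w * pairColumns lo hi x y =
      diagonal fun i => p i * w (lo i) + q i * w (hi i) := fun w => by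
    rw [conjTranspose_pairColumns_mul_diagonal_mul hlo hhi hdisj]
    congr 1; ext i
    linear_combination w (lo i) * hsq _ (hp i) + w (hi i) * hsq _ (hq i)
  refine mem_rankNumRange_of_conjTranspose_mul_self (U := pairColumns lo hi x y) ?_ ?_
  · simpa [← Complex.ofReal_add, hpq] using hU 1
  · rw [hU, smul_one_eq_diagonal]
    congr 1; ext i
    exact_mod_cast hlam i

lemma rankNumRange_diagonal_eq_Icc (hkN : 2 * k ≤ N) {a : Fin N → ℝ} (ha : Monotone a)
    {i₀ i₁ : Fin N} (hi₀ : (i₀ : ℕ) + 1 = k) (hi₁ : (i₁ : ℕ) + k = N) :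
    rankNumRange k (diagonal fun j => (a j : ℂ)) = Set.Icc (a i₀ : ℂ) (a i₁) :=
  (rankNumRange_diagonal_subset_Icc ha hi₀ hi₁).antisymm
    (Icc_subset_rankNumRange_diagonal hkN ha hi₀ hi₁)

end diagonal

theorem stmt_4 {N k : ℕ} (hk : 1 ≤ k) (hkN : 2 * k ≤ N)
    (M : Matrix (Fin N) (Fin N) ℂ)
    (a : Fin N → ℝ) (ha : Monotone a)
    (heig : HasONEigenbasis M (fun j => (a j : ℂ))) :
    rankNumRange k M =
      { c : ℂ | c.im = 0 ∧ a ⟨k - 1, by omega⟩ ≤ c.re ∧ c.re ≤ a ⟨N - k, by omega⟩ } := by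
  obtain ⟨U, hU, hUMU⟩ := heig.exists_unitary_conj_eq_diagonal
  rw [← rankNumRange_unitary_conj M hU, hUMU, rankNumRange_diagonal_eq_Icc hkN ha
    (i₀ := ⟨k - 1, by omega⟩) (i₁ := ⟨N - k, by omega⟩) (by simp; omega) (by simp; omega)]
  ext c
  simp only [Set.mem_Icc, Complex.le_def, Complex.ofReal_re, Complex.ofReal_im, Set.mem_ofPred_eq]
  constructor
  · rintro ⟨⟨hlow, him⟩, hhigh, -⟩
    exact ⟨him.symm, hlow, hhigh⟩
  · rintro ⟨him, hlow, hhigh⟩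
    exact ⟨⟨hlow, him.symm⟩, hhigh, him⟩
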